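/- arXiv:0810.1439 — 4 statements merged into one kernel-verified Lean document; each statement's English description precedes it below -/
import Mathlib

section
/- Let y₁, y₂, y₃, y₄ ∈ ℝ² be pairwise distinct. Then the three conditions (y₁ + y₃)/2 = (y₂ + y₄)/2, ‖y₁ − y₃‖ = ‖y₂ − y₄‖, and ‖y₁ − y₂‖ − ‖y₂ − y₃‖ + ‖y₃ − y₄‖ − ‖y₄ − y₁‖ = 0 hold simultaneously if and only if y₁, y₂, y₃, y₄ are the consecutive vertices of a square. -/
/-! A quadrilateral whose diagonals bisect each other is a parallelogram with sides
`a = y₂ - y₁`, `b = y₃ - y₂`: opposite sides are equal, the alternating sum of side lengths is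
`2 (‖a‖ - ‖b‖)`, and the diagonals are `a + b` and `a - b`, which have equal length exactly
when `a ⟂ b`. -/

theorem midpoint_eq_midpoint_iff_add_eq_add {R V : Type*} [Ring R] [Invertible (2 : R)]
    [AddCommGroup V] [Module R V] {y₁ y₂ y₃ y₄ : V} :
    midpoint R y₁ y₃ = midpoint R y₂ y₄ ↔ y₁ + y₃ = y₂ + y₄ := by
  rw [midpoint_eq_midpoint_iff_vsub_eq_vsub, vsub_eq_sub, vsub_eq_sub, sub_eq_sub_iff_add_eq_add,
    add_comm y₄]

theorem norm_add_eq_norm_sub_iff_real_inner_eq_zero {V : Type*} [NormedAddCommGroup V]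
    [InnerProductSpace ℝ V] (x y : V) : ‖x + y‖ = ‖x - y‖ ↔ inner ℝ x y = 0 := by
  rw [InnerProductGeometry.norm_add_eq_norm_sub_iff_angle_eq_pi_div_two,
    InnerProductGeometry.inner_eq_zero_iff_angle_eq_pi_div_two]

section Parallelogram

variable {V : Type*} {y₁ y₂ y₃ y₄ : V}

theorem norm_sides_alternating_sum_eq_zero_iff_of_add_eq_add [SeminormedAddCommGroup V]
    (h : y₁ + y₃ = y₂ + y₄) :
    ‖y₁ - y₂‖ - ‖y₂ - y₃‖ + ‖y₃ - y₄‖ - ‖y₄ - y₁‖ = 0 ↔ ‖y₁ - y₂‖ = ‖y₂ - y₃‖ := by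
  have hy₄ : y₄ = y₁ + y₃ - y₂ := eq_sub_of_add_eq' h.symm
  have h₃₄ : y₃ - y₄ = -(y₁ - y₂) := by rw [hy₄]; abel
  have h₄₁ : y₄ - y₁ = -(y₂ - y₃) := by rw [hy₄]; abel
  rw [h₃₄, h₄₁, norm_neg, norm_neg]
  constructor <;> intro hsum <;> linarith

theorem norm_diag_eq_iff_real_inner_eq_zero_of_add_eq_add [NormedAddCommGroup V]
    [InnerProductSpace ℝ V] (h : y₁ + y₃ = y₂ + y₄) :
    ‖y₁ - y₃‖ = ‖y₂ - y₄‖ ↔ inner ℝ (y₂ - y₁) (y₃ - y₂) = 0 := by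
  have hy₄ : y₄ = y₁ + y₃ - y₂ := eq_sub_of_add_eq' h.symm
  have h₁₃ : y₁ - y₃ = -((y₂ - y₁) + (y₃ - y₂)) := by abel
  have h₂₄ : y₂ - y₄ = (y₂ - y₁) - (y₃ - y₂) := by rw [hy₄]; abel
  rw [h₁₃, h₂₄, norm_neg, norm_add_eq_norm_sub_iff_real_inner_eq_zero]

end Parallelogram

theorem square_test_characterization_general
    (y₁ y₂ y₃ y₄ : EuclideanSpace ℝ (Fin 2)) :
    (midpoint ℝ y₁ y₃ = midpoint ℝ y₂ y₄ ∧
     ‖y₁ - y₃‖ = ‖y₂ - y₄‖ ∧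
     ‖y₁ - y₂‖ - ‖y₂ - y₃‖ + ‖y₃ - y₄‖ - ‖y₄ - y₁‖ = 0) ↔
    (y₁ + y₃ = y₂ + y₄ ∧
     ‖y₁ - y₂‖ = ‖y₂ - y₃‖ ∧
     (inner ℝ (y₂ - y₁) (y₃ - y₂) : ℝ) = 0) := by
  rw [midpoint_eq_midpoint_iff_add_eq_add]
  constructor
  · rintro ⟨h, hdiag, hsides⟩
    exact ⟨h, (norm_sides_alternating_sum_eq_zero_iff_of_add_eq_add h).1 hsides,
      (norm_diag_eq_iff_real_inner_eq_zero_of_add_eq_add h).1 hdiag⟩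
  · rintro ⟨h, hsides, hinner⟩
    exact ⟨h, (norm_diag_eq_iff_real_inner_eq_zero_of_add_eq_add h).2 hinner,
      (norm_sides_alternating_sum_eq_zero_iff_of_add_eq_add h).2 hsides⟩

/-- Characterization of squares among quadruples of pairwise distinct points of the plane:
the test equations of the square peg problem vanish simultaneously iff the four points are
the consecutive vertices of a square. -/
theorem square_test_characterization
    (y₁ y₂ y₃ y₄ : EuclideanSpace ℝ (Fin 2))
    (h₁₂ : y₁ ≠ y₂) (h₁₃ : y₁ ≠ y₃) (h₁₄ : y₁ ≠ y₄)
    (h₂₃ : y₂ ≠ y₃) (h₂₄ : y₂ ≠ y₄) (h₃₄ : y₃ ≠ y₄) :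
    (midpoint ℝ y₁ y₃ = midpoint ℝ y₂ y₄ ∧
     ‖y₁ - y₃‖ = ‖y₂ - y₄‖ ∧
     ‖y₁ - y₂‖ - ‖y₂ - y₃‖ + ‖y₃ - y₄‖ - ‖y₄ - y₁‖ = 0) ↔
    (y₁ + y₃ = y₂ + y₄ ∧
     ‖y₁ - y₂‖ = ‖y₂ - y₃‖ ∧
     (inner ℝ (y₂ - y₁) (y₃ - y₂) : ℝ) = 0) :=
  square_test_characterization_general y₁ y₂ y₃ y₄
end

section
/- Let x₁, …, x₆ ∈ ℝ² be six points that do not all lie on one line. Then (x₁,…,x₆) is an affine-regular hexagon if and only if x₁ + x₄ = x₂ + x₅ = x₃ + x₆ and x₁ − x₂ + x₃ − x₄ + x₅ − x₆ = 0. -/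
/-!
The vertices `v₀, …, v₅` of the regular hexagon satisfy `v₂ = v₁ - v₀`, `v₃ = -v₀`, `v₄ = -v₁`,
`v₅ = v₀ - v₁`, so it is the hexagon `(c + a, c + b, c + b - a, c - a, c - b, c - b + a)` with
`c = 0`, `a = v₀`, `b = v₁`. Affine maps preserve this shape, and any two bases `(v₀, v₁)`,
`(a, b)` of the plane are related by a linear automorphism; hence the affine-regular hexagons
are exactly these hexagons with `a, b` linearly independent. The two linear conditions say
precisely that the six points have this shape (with `c` the common midpoint of the diagonals),
and since all six points lie on `c + span {a, b}`, non-collinearity forces `a, b` to be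
independent.
-/

open Real

noncomputable section

/-- The `j`-th vertex (for `j : Fin 6`, corresponding to index `j+1 ∈ {1,…,6}`)
of the regular hexagon with vertices `(cos(kπ/3), sin(kπ/3))`, `k = 1,…,6`. -/
def regularHexVertex (j : Fin 6) : EuclideanSpace ℝ (Fin 2) :=
  WithLp.toLp 2 ![Real.cos (((j : ℕ) + 1) * π / 3), Real.sin (((j : ℕ) + 1) * π / 3)]

/-- A 6-tuple of points of the plane is an affine-regular hexagon if it is the image of
the vertices of the regular hexagon under an invertible affine transformation. -/
def AffineRegularHexagon (x : Fin 6 → EuclideanSpace ℝ (Fin 2)) : Prop :=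
  ∃ T : EuclideanSpace ℝ (Fin 2) ≃ᵃ[ℝ] EuclideanSpace ℝ (Fin 2),
    ∀ j : Fin 6, x j = T (regularHexVertex j)

def affineHexagon {V : Type*} [AddCommGroup V] (c a b : V) : Fin 6 → V :=
  ![c + a, c + b, c + (b - a), c - a, c - b, c - (b - a)]

section

variable {k V : Type*} [Ring k] [AddCommGroup V] [Module k V]

theorem AffineMap.map_affineHexagon {W : Type*} [AddCommGroup W] [Module k W] (f : V →ᵃ[k] W)
    (c a b : V) (j : Fin 6) :
    f (affineHexagon c a b j) = affineHexagon (f c) (f.linear a) (f.linear b) j := by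
  have hf : ∀ v, f (c + v) = f c + f.linear v := fun v => by
    rw [add_comm c v, ← vadd_eq_add, f.map_vadd, vadd_eq_add, add_comm]
  fin_cases j <;> simp [affineHexagon, hf, sub_eq_add_neg]

theorem range_affineHexagon_subset_mk' (c : V) {a b : V} {S : Submodule k V} (ha : a ∈ S)
    (hb : b ∈ S) : Set.range (affineHexagon c a b) ⊆ AffineSubspace.mk' c S := by
  rintro _ ⟨j, rfl⟩
  rw [SetLike.mem_coe, AffineSubspace.mem_mk', vsub_eq_sub]
  fin_cases j <;> simp [affineHexagon, S.sub_mem, ha, hb]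

end

section

variable {k V : Type*} [Field k] [AddCommGroup V] [Module k V]

theorem exists_eq_affineHexagon_iff [CharZero k] {x₁ x₂ x₃ x₄ x₅ x₆ : V} :
    (∃ c a b : V, ![x₁, x₂, x₃, x₄, x₅, x₆] = affineHexagon c a b) ↔
      x₁ + x₄ = x₂ + x₅ ∧ x₂ + x₅ = x₃ + x₆ ∧ x₁ - x₂ + x₃ - x₄ + x₅ - x₆ = 0 := by
  constructor
  · rintro ⟨c, a, b, hx⟩
    simp only [affineHexagon, Matrix.vecCons_inj] at hx
    obtain ⟨rfl, rfl, rfl, rfl, rfl, rfl, -⟩ := hx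
    refine ⟨?_, ?_, ?_⟩ <;> abel
  · rintro ⟨h₁₄, h₃₆, h_alt⟩
    refine ⟨(2⁻¹ : k) • (x₁ + x₄), x₁ - (2⁻¹ : k) • (x₁ + x₄), x₂ - (2⁻¹ : k) • (x₁ + x₄), ?_⟩
    simp only [affineHexagon, Matrix.vecCons_inj]
    refine ⟨by abel, by abel, ?_, by module, ?_, ?_, trivial⟩
    · linear_combination (norm := module) (-2⁻¹ : k) • h₃₆ + (2⁻¹ : k) • h_alt
    · linear_combination (norm := module) -h₁₄
    · linear_combination (norm := module) (-1 : k) • h₁₄ + (-2⁻¹ : k) • h₃₆ + (-2⁻¹ : k) • h_alt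

theorem linearIndependent_of_not_collinear_affineHexagon {c a b : V}
    (h : ¬ Collinear k (Set.range (affineHexagon c a b))) : LinearIndependent k ![a, b] := by
  contrapose! h
  have hspan : (Set.range ![a, b]).finrank k ≤ 1 := by
    have := finrank_range_le_card (R := k) ![a, b]
    have := mt linearIndependent_iff_card_eq_finrank_span.2 h
    simp only [Fintype.card_fin] at *
    omega
  have := FiniteDimensional.span_of_finite k (Set.finite_range ![a, b])
  rw [collinear_iff_finrank_le_one]
  refine le_trans (Submodule.finrank_mono ?_) hspan
  have ha : a ∈ Submodule.span k (Set.range ![a, b]) := Submodule.subset_span ⟨0, rfl⟩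
  have hb : b ∈ Submodule.span k (Set.range ![a, b]) := Submodule.subset_span ⟨1, rfl⟩
  exact (vectorSpan_mono k (range_affineHexagon_subset_mk' c ha hb)).trans_eq
    (AffineSubspace.direction_mk' c _)

theorem exists_linearEquiv_apply_eq [FiniteDimensional k V] {ι : Type*} [Fintype ι] {u w : ι → V}
    (hu : LinearIndependent k u) (hw : LinearIndependent k w)
    (hcard : Fintype.card ι = Module.finrank k V) : ∃ L : V ≃ₗ[k] V, ∀ i, L (u i) = w i :=
  let B := basisOfLinearIndependentOfCardEqFinrank' u hu hcard
  let B' := basisOfLinearIndependentOfCardEqFinrank' w hw hcard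
  ⟨B.equiv B' (Equiv.refl ι), fun i => by simpa [B, B'] using B.equiv_apply i B' (Equiv.refl ι)⟩

theorem exists_affineEquiv_comp_affineHexagon_iff [FiniteDimensional k V]
    (hV : Module.finrank k V = 2) {u₀ u₁ : V} (hu : LinearIndependent k ![u₀, u₁])
    {x : Fin 6 → V} :
    (∃ T : V ≃ᵃ[k] V, ∀ j, x j = T (affineHexagon 0 u₀ u₁ j)) ↔
      ∃ c a b, LinearIndependent k ![a, b] ∧ x = affineHexagon c a b := by
  constructor
  · rintro ⟨T, hT⟩
    refine ⟨T 0, T.linear u₀, T.linear u₁, ?_, funext fun j => ?_⟩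
    · have h := hu.map' T.linear.toLinearMap T.linear.ker
      rwa [← FinVec.map_eq] at h
    · rw [hT, ← T.coe_toAffineMap, AffineMap.map_affineHexagon]
      simp
  · rintro ⟨c, a, b, hab, rfl⟩
    obtain ⟨L, hL⟩ := exists_linearEquiv_apply_eq hu hab (by rw [hV, Fintype.card_fin])
    refine ⟨L.toAffineEquiv.trans (AffineEquiv.constVAdd k V c), fun j => ?_⟩
    rw [← AffineEquiv.coe_toAffineMap, AffineMap.map_affineHexagon]
    have ha : L.toAffineEquiv.linear u₀ = a := hL 0
    have hb : L.toAffineEquiv.linear u₁ = b := hL 1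
    simp [ha, hb]

end

theorem Real.cos_add_two_pi_div_three (θ : ℝ) :
    cos (θ + 2 * π / 3) = cos (θ + π / 3) - cos θ := by
  have h := cos_add_cos (θ + 2 * π / 3) θ
  rw [show (θ + 2 * π / 3 + θ) / 2 = θ + π / 3 by ring,
    show (θ + 2 * π / 3 - θ) / 2 = π / 3 by ring, cos_pi_div_three] at h
  linarith

theorem Real.sin_add_two_pi_div_three (θ : ℝ) :
    sin (θ + 2 * π / 3) = sin (θ + π / 3) - sin θ := by
  have h := sin_add_sin (θ + 2 * π / 3) θ
  rw [show (θ + 2 * π / 3 + θ) / 2 = θ + π / 3 by ring,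
    show (θ + 2 * π / 3 - θ) / 2 = π / 3 by ring, cos_pi_div_three] at h
  linarith

theorem regularHexVertex_eq_affineHexagon :
    regularHexVertex = affineHexagon 0 (regularHexVertex 0) (regularHexVertex 1) := by
  let u (θ : ℝ) : EuclideanSpace ℝ (Fin 2) := WithLp.toLp 2 ![cos θ, sin θ]
  have hv (j : Fin 6) : regularHexVertex j = u (((j : ℕ) + 1) * π / 3) := rfl
  have half_turn (θ : ℝ) : u (θ + π) = -u θ := by
    ext i; fin_cases i <;> simp [u, cos_add_pi, sin_add_pi]
  have third_turn (θ : ℝ) : u (θ + 2 * π / 3) = u (θ + π / 3) - u θ := by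
    ext i; fin_cases i <;> simp [u, cos_add_two_pi_div_three, sin_add_two_pi_div_three]
  funext j
  simp only [hv]
  fin_cases j <;>
    simp only [affineHexagon, Fin.isValue, Fin.zero_eta, Fin.mk_one, Fin.reduceFinMk,
      Fin.coe_ofNat_eq_mod, Nat.zero_mod, Nat.one_mod, CharP.cast_eq_zero, Nat.cast_one,
      Nat.cast_ofNat, zero_add, one_mul, zero_sub, neg_sub, Matrix.cons_val_zero,
      Matrix.cons_val_one, Matrix.cons_val]
  · rw [show (2 + 1) * π / 3 = π / 3 + 2 * π / 3 by ring, third_turn]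
    ring_nf
  · rw [show (3 + 1) * π / 3 = π / 3 + π by ring, half_turn]
  · rw [show (4 + 1) * π / 3 = (1 + 1) * π / 3 + π by ring, half_turn]
  · rw [show (5 + 1) * π / 3 = π / 3 + 2 * π / 3 + π by ring, half_turn, third_turn, neg_sub]
    ring_nf

theorem linearIndependent_regularHexVertex :
    LinearIndependent ℝ ![regularHexVertex 0, regularHexVertex 1] := by
  have h₀ : regularHexVertex 0 = !₂[1 / 2, √3 / 2] := by
    simp [regularHexVertex, cos_pi_div_three, sin_pi_div_three]
  have h₁ : regularHexVertex 1 = !₂[-(1 / 2), √3 / 2] := by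
    rw [regularHexVertex, show (((1 : Fin 6) : ℕ) + 1 : ℝ) * π / 3 = π - π / 3 by norm_num; ring,
      cos_pi_sub, sin_pi_sub, cos_pi_div_three, sin_pi_div_three]
  rw [LinearIndependent.pair_iff, h₀, h₁]
  intro s t hst
  have hx := congrArg (· 0) hst
  have hy := congrArg (· 1) hst
  simp only [Fin.isValue, one_div, PiLp.add_apply, PiLp.smul_apply, Matrix.cons_val_zero,
    smul_eq_mul, mul_neg, PiLp.zero_apply, Matrix.cons_val_one, Matrix.cons_val_fin_one] at hx hy
  have hsum : s + t = 0 := by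
    have : (s + t) * (√3 / 2) = 0 := by linarith
    exact (mul_eq_zero.1 this).resolve_right (by positivity)
  constructor <;> linarith

theorem affineRegularHexagon_iff_exists_affineHexagon {x : Fin 6 → EuclideanSpace ℝ (Fin 2)} :
    AffineRegularHexagon x ↔
      ∃ c a b, LinearIndependent ℝ ![a, b] ∧ x = affineHexagon c a b := by
  rw [← exists_affineEquiv_comp_affineHexagon_iff finrank_euclideanSpace_fin
    linearIndependent_regularHexVertex, ← regularHexVertex_eq_affineHexagon]
  rfl

/-- Six points of the plane which are not collinear form an affine-regular hexagon iff
the main diagonals have a common midpoint and the alternating sum of the vertices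
vanishes. -/
theorem affineRegularHexagon_iff
    (x₁ x₂ x₃ x₄ x₅ x₆ : EuclideanSpace ℝ (Fin 2))
    (hcol : ¬ Collinear ℝ ({x₁, x₂, x₃, x₄, x₅, x₆} : Set (EuclideanSpace ℝ (Fin 2)))) :
    AffineRegularHexagon ![x₁, x₂, x₃, x₄, x₅, x₆] ↔
      (x₁ + x₄ = x₂ + x₅ ∧ x₂ + x₅ = x₃ + x₆ ∧
       x₁ - x₂ + x₃ - x₄ + x₅ - x₆ = 0) := by
  rw [affineRegularHexagon_iff_exists_affineHexagon, ← exists_eq_affineHexagon_iff (k := ℝ)]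
  constructor
  · rintro ⟨c, a, b, -, hx⟩
    exact ⟨c, a, b, hx⟩
  · rintro ⟨c, a, b, hx⟩
    have hcol' : ¬ Collinear ℝ (Set.range (affineHexagon c a b)) := by
      simpa only [← hx, Matrix.range_cons, Matrix.range_empty, Set.union_empty,
        Set.singleton_union] using hcol
    exact ⟨c, a, b, linearIndependent_of_not_collinear_affineHexagon hcol', hx⟩
end
end

section
/- Let x₁, …, x₆ ∈ ℝ be pairwise distinct real numbers satisfying x₁ + x₄ = x₂ + x₅ = x₃ + x₆ and x₁ − x₂ + x₃ − x₄ + x₅ − x₆ = 0. Then the indices cannot appear in cyclic order on the line: for no i ∈ {0,1,2,3,4,5} does x_{i+1} < x_{i+2} < x_{i+3} < x_{i+4} < x_{i+5} < x_{i+6} hold (indices taken modulo 6), and likewise for no i does x_{i+1} > x_{i+2} > x_{i+3} > x_{i+4} > x_{i+5} > x_{i+6} hold. -/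
lemma opposite_sum_eq_opposite_sum_succ {α : Type*} [AddCommSemigroup α] {x : Fin 6 → α}
    (h₁ : x 0 + x 3 = x 1 + x 4) (h₂ : x 1 + x 4 = x 2 + x 5) (i : Fin 6) :
    x (i + 1) + x (i + 4) = x (i + 2) + x (i + 5) := by
  fin_cases i <;> grind [add_comm]

theorem degenerate_hexagon_not_cyclic_general
    (x : Fin 6 → ℝ)
    (h₁ : x 0 + x 3 = x 1 + x 4) (h₂ : x 1 + x 4 = x 2 + x 5) :
    ∀ i : Fin 6,
      (¬ (x (i + 1) < x (i + 2) ∧ x (i + 2) < x (i + 3) ∧ x (i + 3) < x (i + 4) ∧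
          x (i + 4) < x (i + 5) ∧ x (i + 5) < x (i + 6))) ∧
      (¬ (x (i + 1) > x (i + 2) ∧ x (i + 2) > x (i + 3) ∧ x (i + 3) > x (i + 4) ∧
          x (i + 4) > x (i + 5) ∧ x (i + 5) > x (i + 6))) := by
  intro i
  -- A cyclic order compares `x (i + 1)` with `x (i + 2)` and `x (i + 4)` with `x (i + 5)` the
  -- same way, so it would separate two opposite sums, which all coincide.
  have hsum := opposite_sum_eq_opposite_sum_succ h₁ h₂ i
  exact ⟨fun ⟨h12, _, _, h45, _⟩ => (add_lt_add h12 h45).ne hsum,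
    fun ⟨h12, _, _, h45, _⟩ => (add_lt_add h12 h45).ne' hsum⟩

/-- Six pairwise distinct real numbers forming a degenerate (collinear) affine-regular
hexagon never appear on the line in cyclic order of their indices, in either direction. -/
theorem degenerate_hexagon_not_cyclic
    (x : Fin 6 → ℝ) (hinj : Function.Injective x)
    (h₁ : x 0 + x 3 = x 1 + x 4) (h₂ : x 1 + x 4 = x 2 + x 5)
    (h₃ : x 0 - x 1 + x 2 - x 3 + x 4 - x 5 = 0) :
    ∀ i : Fin 6,
      (¬ (x (i + 1) < x (i + 2) ∧ x (i + 2) < x (i + 3) ∧ x (i + 3) < x (i + 4) ∧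
          x (i + 4) < x (i + 5) ∧ x (i + 5) < x (i + 6))) ∧
      (¬ (x (i + 1) > x (i + 2) ∧ x (i + 2) > x (i + 3) ∧ x (i + 3) > x (i + 4) ∧
          x (i + 4) > x (i + 5) ∧ x (i + 5) > x (i + 6))) :=
  degenerate_hexagon_not_cyclic_general x h₁ h₂
end

section
/- Let S¹ = {x ∈ ℝ² : ‖x‖ = 1} be the unit circle. The closure, inside S¹ × S¹ × S¹, of the set {(x, y, (x−y)/‖x−y‖) : x, y ∈ S¹, x ≠ y} (the graph of the normalized difference map on the configuration space of ordered pairs of distinct points of S¹) is homeomorphic to the annulus S¹ × [0, 1]. -/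
/-!
Identify `ℝ²` with `ℂ`. If `x ≠ y` are unit complex numbers and `w = (x - y)/|x - y|`, then
after rotating by `(-i w)⁻¹` the difference `x - y` becomes a positive multiple of `i`, so the
rotated points are `e^{iθ}` and `e^{-iθ}` with `θ ∈ (0, π)`. Hence `(w, θ/π)` parametrizes the
graph, and the parametrization extends continuously and injectively to `S¹ × [0, 1]`: the two
boundary circles `θ = 0, π` are where `x = y`. A continuous injection of a compact space is an
embedding, and its image is the closure of the graph because `S¹ × (0, 1)` is dense.
-/

open Complex Metric Set Real
open scoped ComplexConjugate

section NormalizedDifference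

variable (E : Type*) [NormedAddCommGroup E] [NormedSpace ℝ E]

def normalizedDiffGraph : Set (sphere (0 : E) 1 × sphere (0 : E) 1 × sphere (0 : E) 1) :=
  {p | (p.1 : E) ≠ p.2.1 ∧ (p.2.2 : E) = ‖(p.1 : E) - p.2.1‖⁻¹ • ((p.1 : E) - p.2.1)}

variable {E} {F : Type*} [NormedAddCommGroup F] [NormedSpace ℝ F]

namespace LinearIsometryEquiv

def unitSphereHomeomorph (L : E ≃ₗᵢ[ℝ] F) : sphere (0 : E) 1 ≃ₜ sphere (0 : F) 1 :=
  L.toHomeomorph.subtype fun x => by simp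

def unitSphereCubeHomeomorph (L : E ≃ₗᵢ[ℝ] F) :
    (sphere (0 : E) 1 × sphere (0 : E) 1 × sphere (0 : E) 1) ≃ₜ
      (sphere (0 : F) 1 × sphere (0 : F) 1 × sphere (0 : F) 1) :=
  L.unitSphereHomeomorph.prodCongr (L.unitSphereHomeomorph.prodCongr L.unitSphereHomeomorph)

theorem normalizedDiffGraph_eq_preimage (L : E ≃ₗᵢ[ℝ] F) :
    normalizedDiffGraph E = L.unitSphereCubeHomeomorph ⁻¹' normalizedDiffGraph F := by
  ext ⟨x, y, w⟩
  change _ ↔ (L x ≠ L y ∧ L w = ‖L x - L y‖⁻¹ • (L x - L y))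
  simp only [normalizedDiffGraph, mem_ofPred_eq, ← map_sub, norm_map, ← map_smul,
    L.injective.ne_iff, L.injective.eq_iff]

def closureNormalizedDiffGraphHomeomorph (L : E ≃ₗᵢ[ℝ] F) :
    closure (normalizedDiffGraph E) ≃ₜ closure (normalizedDiffGraph F) :=
  L.unitSphereCubeHomeomorph.subtype fun p => by
    rw [L.normalizedDiffGraph_eq_preimage, ← Homeomorph.preimage_closure]
    rfl

end LinearIsometryEquiv

end NormalizedDifference

namespace Complex

theorem neg_I_mul_mul_exp_mem_sphere (u : sphere (0 : ℂ) 1) (θ : ℝ) :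
    -I * u * exp (θ * I) ∈ sphere (0 : ℂ) 1 := by
  simp [norm_exp_ofReal_mul_I, norm_eq_of_mem_sphere u]

theorem neg_I_mul_mul_exp_sub (u : ℂ) (θ : ℝ) :
    -I * u * exp (θ * I) - -I * u * exp (↑(-θ) * I) = ↑(2 * Real.sin θ) * u := by
  rw [exp_mul_I, exp_mul_I]
  push_cast
  rw [cos_neg, sin_neg]
  linear_combination (-2 * u * sin θ) * I_sq

theorem exists_mem_Ioo_exp_mul_I_eq {a : ℂ} (ha : ‖a‖ = 1) (him : 0 < a.im) :
    ∃ θ ∈ Ioo 0 π, exp (θ * I) = a := by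
  refine ⟨arg a, ⟨?_, arg_lt_pi_iff.mpr (Or.inr him.ne')⟩, ?_⟩
  · refine (arg_nonneg_iff.mpr him.le).lt_of_ne fun h => him.ne' ?_
    exact (arg_eq_zero_iff.mp h.symm).2
  · simpa [ha] using norm_mul_exp_arg_mul_I a

theorem exp_neg_mul_I_eq_conj (θ : ℝ) : exp (↑(-θ) * I) = conj (exp (θ * I)) := by
  rw [← exp_conj]
  simp

theorem conj_eq_and_im_pos_of_sub_eq_mul_I {a b : ℂ} (ha : ‖a‖ = 1) (hb : ‖b‖ = 1) {n : ℝ}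
    (hn : 0 < n) (hab : a - b = n * I) : b = conj a ∧ 0 < a.im := by
  have hre : a.re = b.re := by simpa [sub_eq_zero] using congrArg re hab
  have him : a.im - b.im = n := by simpa using congrArg im hab
  have hsq : a.re * a.re + a.im * a.im = b.re * b.re + b.im * b.im := by
    rw [← normSq_apply, ← normSq_apply, ← Complex.sq_norm, ← Complex.sq_norm, ha, hb]
  have hsum : a.im + b.im = 0 := by
    have : (a.im - b.im) * (a.im + b.im) = 0 := by rw [hre] at hsq; linear_combination hsq
    exact (mul_eq_zero.mp this).resolve_left (him ▸ hn.ne')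
  exact ⟨Complex.ext (by simp [hre]) (by simp; linarith), by linarith⟩

theorem exists_eq_neg_I_mul_mul_exp {x y w : ℂ} (hx : ‖x‖ = 1) (hy : ‖y‖ = 1) (hw : ‖w‖ = 1)
    {n : ℝ} (hn : 0 < n) (hxy : x - y = n * w) :
    ∃ θ ∈ Ioo 0 π, x = -I * w * exp (θ * I) ∧ y = -I * w * exp (↑(-θ) * I) := by
  set v := -I * w
  have hv : ‖v‖ = 1 := by simp [v, hw]
  have hv0 : v ≠ 0 := norm_ne_zero_iff.mp (by simp [hv])
  have hrot : x * v⁻¹ - y * v⁻¹ = n * I := by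
    rw [← sub_mul, hxy, inv_eq_conj hv]
    simp only [v, map_mul, map_neg, conj_I, neg_neg]
    rw [mul_assoc, mul_comm w, mul_assoc, conj_mul', hw]
    simp
  obtain ⟨hy', him⟩ := conj_eq_and_im_pos_of_sub_eq_mul_I (by simp [hx, hv]) (by simp [hy, hv])
    hn hrot
  obtain ⟨θ, hθ, hexp⟩ := exists_mem_Ioo_exp_mul_I_eq (by simp [hx, hv]) him
  refine ⟨θ, hθ, ?_, ?_⟩
  · rw [hexp]
    field_simp
  · rw [exp_neg_mul_I_eq_conj, hexp, ← hy']
    field_simp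

noncomputable def blowupParam (p : sphere (0 : ℂ) 1 × Icc (0 : ℝ) 1) :
    sphere (0 : ℂ) 1 × sphere (0 : ℂ) 1 × sphere (0 : ℂ) 1 :=
  (⟨_, neg_I_mul_mul_exp_mem_sphere p.1 (π * p.2)⟩,
    ⟨_, neg_I_mul_mul_exp_mem_sphere p.1 (-(π * p.2))⟩, p.1)

theorem continuous_blowupParam : Continuous blowupParam := by
  unfold blowupParam
  fun_prop

theorem blowupParam_injective : Function.Injective blowupParam := by
  rintro ⟨u, s, hs⟩ ⟨v, t, ht⟩ h
  obtain rfl : u = v := congrArg (·.2.2) h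
  have hu : -I * (u : ℂ) ≠ 0 := by simp [ne_zero_of_mem_sphere one_ne_zero u]
  have hexp : exp (↑(π * s) * I) = exp (↑(π * t) * I) :=
    mul_left_cancel₀ hu (congrArg (fun q => (q.1 : ℂ)) h)
  have hcos : Real.cos (π * s) = Real.cos (π * t) := by
    simpa only [exp_ofReal_mul_I_re] using congrArg re hexp
  have hmem : ∀ r ∈ Icc (0 : ℝ) 1, π * r ∈ Icc 0 π := fun r hr =>
    ⟨by nlinarith [pi_pos, hr.1], by nlinarith [pi_pos, hr.2]⟩
  obtain rfl : s = t := mul_left_cancel₀ pi_ne_zero (injOn_cos (hmem s hs) (hmem t ht) hcos)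
  rfl

theorem blowupParam_mem_normalizedDiffGraph (u : sphere (0 : ℂ) 1) (s : Icc (0 : ℝ) 1)
    (hs : (s : ℝ) ∈ Ioo 0 1) : blowupParam (u, s) ∈ normalizedDiffGraph ℂ := by
  have hsin : 0 < Real.sin (π * s) := sin_pos_of_pos_of_lt_pi (by nlinarith [pi_pos, hs.1])
    (by nlinarith [pi_pos, hs.2])
  have hnorm : ‖(2 * Real.sin (π * s) : ℝ) * (u : ℂ)‖ = 2 * Real.sin (π * s) := by
    rw [norm_mul, norm_real, norm_eq_of_mem_sphere u, Real.norm_of_nonneg (by positivity), mul_one]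
  have hsub : ((blowupParam (u, s)).1 : ℂ) - (blowupParam (u, s)).2.1 =
      ↑(2 * Real.sin (π * s)) * u :=
    neg_I_mul_mul_exp_sub u (π * s)
  refine ⟨sub_ne_zero.mp ?_, ?_⟩ <;> rw [hsub]
  · exact mul_ne_zero (by exact_mod_cast (by positivity : (2 * Real.sin (π * s)) ≠ 0))
      (ne_zero_of_mem_sphere one_ne_zero u)
  · rw [hnorm, real_smul, ← mul_assoc, ← ofReal_mul, inv_mul_cancel₀ (by positivity), ofReal_one,
      one_mul]
    rfl

theorem normalizedDiffGraph_subset_range_blowupParam :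
    normalizedDiffGraph ℂ ⊆ range blowupParam := by
  rintro ⟨x, y, w⟩ ⟨hne, hw⟩
  have hn : 0 < ‖(x : ℂ) - y‖ := norm_pos_iff.mpr (sub_ne_zero.mpr hne)
  have hxy : (x : ℂ) - y = ‖(x : ℂ) - y‖ * w := by
    rw [hw, real_smul, ← mul_assoc, ← ofReal_mul, mul_inv_cancel₀ hn.ne', ofReal_one, one_mul]
  obtain ⟨θ, hθ, hx, hy⟩ := exists_eq_neg_I_mul_mul_exp (norm_eq_of_mem_sphere x)
    (norm_eq_of_mem_sphere y) (norm_eq_of_mem_sphere w) hn hxy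
  have hs : θ / π ∈ Icc (0 : ℝ) 1 := ⟨by have := hθ.1; positivity,
    (div_le_one pi_pos).mpr hθ.2.le⟩
  have hθπ : π * (θ / π) = θ := mul_div_cancel₀ θ pi_ne_zero
  refine ⟨(w, ⟨θ / π, hs⟩), Prod.ext (Subtype.ext ?_) (Prod.ext (Subtype.ext ?_) rfl)⟩
  · simp only [blowupParam, hθπ, hx]
  · simp only [blowupParam, hθπ, hy]

theorem closure_normalizedDiffGraph_eq_range_blowupParam :
    closure (normalizedDiffGraph ℂ) = range blowupParam := by
  refine (closure_minimal normalizedDiffGraph_subset_range_blowupParam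
    (isCompact_range continuous_blowupParam).isClosed).antisymm ?_
  have hdense : Dense ((univ : Set (sphere (0 : ℂ) 1)) ×ˢ
      (Subtype.val ⁻¹' Ioo 0 1 : Set (Icc (0 : ℝ) 1))) := by
    refine dense_univ.prod (Subtype.dense_iff.mpr ?_)
    rw [image_preimage_eq_inter_range, Subtype.range_coe, inter_eq_left.mpr Ioo_subset_Icc_self,
      closure_Ioo zero_ne_one]
  refine (continuous_blowupParam.range_subset_closure_image_dense hdense).trans (closure_mono ?_)
  rintro _ ⟨⟨u, s⟩, ⟨-, hs⟩, rfl⟩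
  exact blowupParam_mem_normalizedDiffGraph u s hs

noncomputable def closureNormalizedDiffGraphHomeomorphSphereProdIcc :
    closure (normalizedDiffGraph ℂ) ≃ₜ sphere (0 : ℂ) 1 × Icc (0 : ℝ) 1 :=
  ((Homeomorph.setCongr closure_normalizedDiffGraph_eq_range_blowupParam).trans
    (continuous_blowupParam.isClosedEmbedding blowupParam_injective).isEmbedding.toHomeomorph.symm)

end Complex

/-- The closure, inside `S¹ × S¹ × S¹`, of the graph of the normalized difference map
`(x, y) ↦ (x − y)/‖x − y‖` on the configuration space of ordered pairs of distinct points
of the unit circle is homeomorphic to the annulus `S¹ × [0,1]`. -/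
theorem blowup_of_torus_along_diagonal_is_annulus :
    Nonempty
      ((closure {p : (Metric.sphere (0 : EuclideanSpace ℝ (Fin 2)) 1) ×
                     (Metric.sphere (0 : EuclideanSpace ℝ (Fin 2)) 1) ×
                     (Metric.sphere (0 : EuclideanSpace ℝ (Fin 2)) 1) |
          (p.1 : EuclideanSpace ℝ (Fin 2)) ≠ (p.2.1 : EuclideanSpace ℝ (Fin 2)) ∧
          (p.2.2 : EuclideanSpace ℝ (Fin 2)) =
            ‖(p.1 : EuclideanSpace ℝ (Fin 2)) - (p.2.1 : EuclideanSpace ℝ (Fin 2))‖⁻¹ •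
              ((p.1 : EuclideanSpace ℝ (Fin 2)) - (p.2.1 : EuclideanSpace ℝ (Fin 2)))} :
          Set _) ≃ₜ
        (Metric.sphere (0 : EuclideanSpace ℝ (Fin 2)) 1 × Set.Icc (0 : ℝ) 1)) :=
  let L := Complex.orthonormalBasisOneI.repr
  ⟨(L.closureNormalizedDiffGraphHomeomorph.symm.trans
      Complex.closureNormalizedDiffGraphHomeomorphSphereProdIcc).trans
    (L.unitSphereHomeomorph.prodCongr (Homeomorph.refl _))⟩
end
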